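/- Let ε > 0 be a real number and let p, q, a, b be integers with p·b − a·q = 1. Let S² be the unit sphere in ℝ³ and, for θ ∈ ℝ, let R_θ : ℝ³ → ℝ³ be the rotation R_θ(x, y, z) = (x·cos θ − y·sin θ, x·sin θ + y·cos θ, z). The map Ψ from (1/ε, ∞) × (ℝ/2πℤ)³ × S² to (0, ∞) × (ℝ/2πℤ)³ × S² defined by Ψ(r, θ⁰, θ¹, θ², v) = (√(2·log(r·ε)), p·θ⁰ + a·θ², θ¹, q·θ⁰ + b·θ², R_{θ⁰} v) is well defined and is a homeomorphism. -/

import Mathlib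

open Real Set

/-- The rotation of `ℝ³` by angle `θ` about the vertical axis. -/
noncomputable def gluckRot (θ : ℝ) (v : EuclideanSpace ℝ (Fin 3)) :
    EuclideanSpace ℝ (Fin 3) :=
  WithLp.toLp 2 ![v 0 * Real.cos θ - v 1 * Real.sin θ,
    v 0 * Real.sin θ + v 1 * Real.cos θ,
    v 2]

noncomputable def rotA (θ : Real.Angle) (v : EuclideanSpace ℝ (Fin 3)) :
    EuclideanSpace ℝ (Fin 3) :=
  WithLp.toLp 2 ![v 0 * θ.cos - v 1 * θ.sin, v 0 * θ.sin + v 1 * θ.cos, v 2]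

lemma rotA_coe (θ : ℝ) (v : EuclideanSpace ℝ (Fin 3)) :
    rotA (θ : Real.Angle) v = gluckRot θ v := by
  simp [rotA, gluckRot, Real.Angle.cos_coe, Real.Angle.sin_coe]

lemma rotA_norm (θ : Real.Angle) (v : EuclideanSpace ℝ (Fin 3)) :
    ‖rotA θ v‖ = ‖v‖ := by
  have hcs := θ.cos_sq_add_sin_sq
  rw [EuclideanSpace.norm_eq, EuclideanSpace.norm_eq]
  congr 1
  simp only [Fin.sum_univ_three, rotA, Matrix.cons_val_zero, Matrix.cons_val_one,
    Matrix.head_cons, Matrix.cons_val_two, Matrix.tail_cons, Real.norm_eq_abs, sq_abs,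
    PiLp.toLp_apply, WithLp.ofLp_toLp]
  nlinarith [hcs]

lemma rotA_neg_rotA (θ : Real.Angle) (v : EuclideanSpace ℝ (Fin 3)) :
    rotA (-θ) (rotA θ v) = v := by
  have hcs := θ.cos_sq_add_sin_sq
  ext i
  fin_cases i
  · simp [rotA, Real.Angle.cos_neg, Real.Angle.sin_neg]
    linear_combination v 0 * hcs
  · simp [rotA, Real.Angle.cos_neg, Real.Angle.sin_neg]
    linear_combination v 1 * hcs
  · simp [rotA]

lemma rotA_rotA_neg (θ : Real.Angle) (v : EuclideanSpace ℝ (Fin 3)) :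
    rotA θ (rotA (-θ) v) = v := by
  have := rotA_neg_rotA (-θ) v
  rwa [neg_neg] at this

lemma rotA_mem_sphere (θ : Real.Angle) (v : Metric.sphere (0 : EuclideanSpace ℝ (Fin 3)) 1) :
    rotA θ (v : EuclideanSpace ℝ (Fin 3)) ∈ Metric.sphere (0 : EuclideanSpace ℝ (Fin 3)) 1 := by
  rw [mem_sphere_zero_iff_norm, rotA_norm]
  exact mem_sphere_zero_iff_norm.mp v.2

lemma continuous_rotA :
    Continuous fun x : Real.Angle × EuclideanSpace ℝ (Fin 3) => rotA x.1 x.2 := by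
  unfold rotA
  refine (PiLp.continuous_toLp 2 _).comp (continuous_pi fun i => ?_)
  have h0 : Continuous fun x : Real.Angle × EuclideanSpace ℝ (Fin 3) => x.2 0 :=
    (PiLp.continuous_apply 2 _ (0 : Fin 3)).comp continuous_snd
  have h1 : Continuous fun x : Real.Angle × EuclideanSpace ℝ (Fin 3) => x.2 1 :=
    (PiLp.continuous_apply 2 _ (1 : Fin 3)).comp continuous_snd
  have h2 : Continuous fun x : Real.Angle × EuclideanSpace ℝ (Fin 3) => x.2 2 :=
    (PiLp.continuous_apply 2 _ (2 : Fin 3)).comp continuous_snd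
  have hc : Continuous fun x : Real.Angle × EuclideanSpace ℝ (Fin 3) => x.1.cos :=
    Real.Angle.continuous_cos.comp continuous_fst
  have hs : Continuous fun x : Real.Angle × EuclideanSpace ℝ (Fin 3) => x.1.sin :=
    Real.Angle.continuous_sin.comp continuous_fst
  fin_cases i <;> simp <;> continuity

/-- For `ε > 0` and integers `p, q, a, b` with `p*b - a*q = 1`, the generalized
Gluck twist gluing map
`Ψ(r, θ⁰, θ¹, θ², v) = (√(2 log(r ε)), p·θ⁰ + a·θ², θ¹, q·θ⁰ + b·θ², R_{θ⁰} v)`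
is a well-defined homeomorphism from `(1/ε, ∞) × (ℝ/2πℤ)³ × S²` onto
`(0, ∞) × (ℝ/2πℤ)³ × S²`. -/
theorem generalized_gluck_twist_gluing_homeomorph (ε : ℝ) (hε : 0 < ε)
    (p q a b : ℤ) (h : p * b - a * q = 1) :
    ∃ Ψ : (Ioi (1 / ε) : Set ℝ) ×
            (AddCircle (2 * π) × AddCircle (2 * π) × AddCircle (2 * π)) ×
            Metric.sphere (0 : EuclideanSpace ℝ (Fin 3)) 1 ≃ₜ
          (Ioi (0 : ℝ) : Set ℝ) ×
            (AddCircle (2 * π) × AddCircle (2 * π) × AddCircle (2 * π)) ×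
            Metric.sphere (0 : EuclideanSpace ℝ (Fin 3)) 1,
      ∀ (r : (Ioi (1 / ε) : Set ℝ)) (θ0 θ1 θ2 : ℝ)
        (v : Metric.sphere (0 : EuclideanSpace ℝ (Fin 3)) 1),
        ((Ψ (r, ((θ0 : AddCircle (2 * π)), (θ1 : AddCircle (2 * π)),
            (θ2 : AddCircle (2 * π))), v)).1 : ℝ) =
          Real.sqrt (2 * Real.log ((r : ℝ) * ε)) ∧
        (Ψ (r, ((θ0 : AddCircle (2 * π)), (θ1 : AddCircle (2 * π)),
            (θ2 : AddCircle (2 * π))), v)).2.1 =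
          ((p • (θ0 : AddCircle (2 * π)) + a • (θ2 : AddCircle (2 * π)),
            (θ1 : AddCircle (2 * π)),
            q • (θ0 : AddCircle (2 * π)) + b • (θ2 : AddCircle (2 * π)))) ∧
        ((Ψ (r, ((θ0 : AddCircle (2 * π)), (θ1 : AddCircle (2 * π)),
            (θ2 : AddCircle (2 * π))), v)).2.2 : EuclideanSpace ℝ (Fin 3)) =
          gluckRot θ0 (v : EuclideanSpace ℝ (Fin 3)) := by
  have hmemf : ∀ r : (Ioi (1 / ε) : Set ℝ),
      Real.sqrt (2 * Real.log ((r : ℝ) * ε)) ∈ Ioi (0 : ℝ) := by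
    rintro ⟨r, hr⟩
    have h1 : 1 < r * ε := (div_lt_iff₀ hε).mp hr
    exact Real.sqrt_pos.mpr (by nlinarith [Real.log_pos h1])
  have hmemb : ∀ s : (Ioi (0 : ℝ) : Set ℝ),
      Real.exp ((s : ℝ) ^ 2 / 2) / ε ∈ Ioi (1 / ε) := by
    rintro ⟨s, hs⟩
    have h1 : (1 : ℝ) < Real.exp (s ^ 2 / 2) := by
      rw [show (1 : ℝ) = Real.exp 0 by simp]
      exact Real.exp_lt_exp.mpr (div_pos (pow_pos hs 2) two_pos)
    exact (div_lt_div_iff_of_pos_right hε).mpr h1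
  have hrpos : ∀ r : (Ioi (1 / ε) : Set ℝ), (0 : ℝ) < (r : ℝ) * ε := by
    rintro ⟨r, hr⟩
    have h1 : 1 < r * ε := (div_lt_iff₀ hε).mp hr
    linarith
  refine ⟨{
    toFun := fun x =>
      (⟨Real.sqrt (2 * Real.log ((x.1 : ℝ) * ε)), hmemf x.1⟩,
       (p • x.2.1.1 + a • x.2.1.2.2, x.2.1.2.1, q • x.2.1.1 + b • x.2.1.2.2),
       ⟨rotA x.2.1.1 (x.2.2 : EuclideanSpace ℝ (Fin 3)), rotA_mem_sphere _ _⟩)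
    invFun := fun y =>
      (⟨Real.exp ((y.1 : ℝ) ^ 2 / 2) / ε, hmemb y.1⟩,
       (b • y.2.1.1 - a • y.2.1.2.2, y.2.1.2.1, p • y.2.1.2.2 - q • y.2.1.1),
       ⟨rotA (-(b • y.2.1.1 - a • y.2.1.2.2)) (y.2.2 : EuclideanSpace ℝ (Fin 3)),
        rotA_mem_sphere _ _⟩)
    left_inv := ?_
    right_inv := ?_
    continuous_toFun := ?_
    continuous_invFun := ?_ }, ?_⟩
  · rintro ⟨⟨r, hr⟩, ⟨θ0, θ1, θ2⟩, v⟩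
    have h1 : 1 < r * ε := (div_lt_iff₀ hε).mp hr
    have hθ0 : b • (p • θ0 + a • θ2) - a • (q • θ0 + b • θ2) = θ0 := by
      match_scalars <;> linarith [h]
    refine Prod.ext (Subtype.ext ?_) (Prod.ext (Prod.ext ?_ (Prod.ext rfl ?_)) ?_)
    · show Real.exp (Real.sqrt (2 * Real.log (r * ε)) ^ 2 / 2) / ε = r
      rw [Real.sq_sqrt (by nlinarith [Real.log_pos h1])]
      rw [mul_div_cancel_left₀ _ (two_ne_zero), Real.exp_log (by linarith)]
      field_simp
    · exact hθ0
    · show p • (q • θ0 + b • θ2) - q • (p • θ0 + a • θ2) = θ2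
      match_scalars <;> linarith [h]
    · refine Subtype.ext ?_
      show rotA (-(b • (p • θ0 + a • θ2) - a • (q • θ0 + b • θ2))) (rotA θ0 v) = v
      rw [hθ0]
      exact rotA_neg_rotA θ0 v
  · rintro ⟨⟨s, hs⟩, ⟨α, β, γ⟩, w⟩
    refine Prod.ext (Subtype.ext ?_) (Prod.ext (Prod.ext ?_ (Prod.ext rfl ?_)) ?_)
    · show Real.sqrt (2 * Real.log (Real.exp (s ^ 2 / 2) / ε * ε)) = s
      rw [div_mul_cancel₀ _ (ne_of_gt hε), Real.log_exp]
      rw [show 2 * (s ^ 2 / 2) = s ^ 2 by ring, Real.sqrt_sq (le_of_lt hs)]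
    · show p • (b • α - a • γ) + a • (p • γ - q • α) = α
      match_scalars <;> linarith [h]
    · show q • (b • α - a • γ) + b • (p • γ - q • α) = γ
      match_scalars <;> linarith [h]
    · refine Subtype.ext ?_
      show rotA (b • α - a • γ) (rotA (-(b • α - a • γ)) w) = w
      exact rotA_rotA_neg _ _
  · refine Continuous.prodMk (Continuous.subtype_mk ?_ _)
      (Continuous.prodMk ?_ (Continuous.subtype_mk ?_ _))
    · apply Real.continuous_sqrt.comp
      apply continuous_const.mul
      rw [continuous_iff_continuousAt]
      intro x
      have hc : Continuous fun x : (Ioi (1 / ε) : Set ℝ) ×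
          (AddCircle (2 * π) × AddCircle (2 * π) × AddCircle (2 * π)) ×
          Metric.sphere (0 : EuclideanSpace ℝ (Fin 3)) 1 => (x.1 : ℝ) * ε :=
        (continuous_subtype_val.comp continuous_fst).mul continuous_const
      exact hc.continuousAt.log (ne_of_gt (hrpos x.1))
    · have h0 : Continuous fun x : (Ioi (1 / ε) : Set ℝ) ×
          (AddCircle (2 * π) × AddCircle (2 * π) × AddCircle (2 * π)) ×
          Metric.sphere (0 : EuclideanSpace ℝ (Fin 3)) 1 => x.2.1.1 :=
        continuous_fst.comp (continuous_fst.comp continuous_snd)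
      have h1 : Continuous fun x : (Ioi (1 / ε) : Set ℝ) ×
          (AddCircle (2 * π) × AddCircle (2 * π) × AddCircle (2 * π)) ×
          Metric.sphere (0 : EuclideanSpace ℝ (Fin 3)) 1 => x.2.1.2.1 :=
        continuous_fst.comp (continuous_snd.comp (continuous_fst.comp continuous_snd))
      have h2 : Continuous fun x : (Ioi (1 / ε) : Set ℝ) ×
          (AddCircle (2 * π) × AddCircle (2 * π) × AddCircle (2 * π)) ×
          Metric.sphere (0 : EuclideanSpace ℝ (Fin 3)) 1 => x.2.1.2.2 :=
        continuous_snd.comp (continuous_snd.comp (continuous_fst.comp continuous_snd))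
      exact Continuous.prodMk
        (((continuous_zsmul p).comp h0).add ((continuous_zsmul a).comp h2))
        (Continuous.prodMk h1
          (((continuous_zsmul q).comp h0).add ((continuous_zsmul b).comp h2)))
    · exact continuous_rotA.comp
        ((continuous_fst.comp (continuous_fst.comp continuous_snd)).prodMk
          (continuous_subtype_val.comp (continuous_snd.comp continuous_snd)))
  · refine Continuous.prodMk (Continuous.subtype_mk ?_ _)
      (Continuous.prodMk ?_ (Continuous.subtype_mk ?_ _))
    · exact (Real.continuous_exp.comp
        ((((continuous_subtype_val.comp continuous_fst).pow 2).div_const 2))).div_const ε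
    · have h0 : Continuous fun y : (Ioi (0 : ℝ) : Set ℝ) ×
          (AddCircle (2 * π) × AddCircle (2 * π) × AddCircle (2 * π)) ×
          Metric.sphere (0 : EuclideanSpace ℝ (Fin 3)) 1 => y.2.1.1 :=
        continuous_fst.comp (continuous_fst.comp continuous_snd)
      have h1 : Continuous fun y : (Ioi (0 : ℝ) : Set ℝ) ×
          (AddCircle (2 * π) × AddCircle (2 * π) × AddCircle (2 * π)) ×
          Metric.sphere (0 : EuclideanSpace ℝ (Fin 3)) 1 => y.2.1.2.1 :=
        continuous_fst.comp (continuous_snd.comp (continuous_fst.comp continuous_snd))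
      have h2 : Continuous fun y : (Ioi (0 : ℝ) : Set ℝ) ×
          (AddCircle (2 * π) × AddCircle (2 * π) × AddCircle (2 * π)) ×
          Metric.sphere (0 : EuclideanSpace ℝ (Fin 3)) 1 => y.2.1.2.2 :=
        continuous_snd.comp (continuous_snd.comp (continuous_fst.comp continuous_snd))
      exact Continuous.prodMk
        (((continuous_zsmul b).comp h0).sub ((continuous_zsmul a).comp h2))
        (Continuous.prodMk h1
          (((continuous_zsmul p).comp h2).sub ((continuous_zsmul q).comp h0)))
    · refine continuous_rotA.comp (Continuous.prodMk ?_
        (continuous_subtype_val.comp (continuous_snd.comp continuous_snd)))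
      exact Continuous.neg ((Continuous.sub
        ((continuous_zsmul b).comp (continuous_fst.comp (continuous_fst.comp continuous_snd)))
        ((continuous_zsmul a).comp
          (continuous_snd.comp (continuous_snd.comp (continuous_fst.comp continuous_snd))))))
  · intro r θ0 θ1 θ2 v
    exact ⟨rfl, rfl, rotA_coe θ0 (v : EuclideanSpace ℝ (Fin 3))⟩
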